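/- arXiv:2001.05364 — 2 statements merged into one kernel-verified Lean document; each statement's English description precedes it below -/
import Mathlib

section
/- Let G = (V, E) be a finite simple undirected graph and let M ⊆ Y ⊆ V. The number of pairs (Y_L, Y_R) such that (Y_L, Y_R) is a consistent cut of G[Y] and M ⊆ Y_L is exactly 2^{c}, where c is the number of connected components of G[Y] that contain no vertex of M. -/
/-- `(YL, YR)` is a consistent cut of the subgraph of `G` induced by `Y`:
it partitions `Y` and no edge of `G` joins a vertex of `YL` to a vertex of `YR`. -/
def ConsCut {V : Type} [DecidableEq V] (G : SimpleGraph V) (Y YL YR : Finset V) : Prop :=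
  YL ∪ YR = Y ∧ Disjoint YL YR ∧ ∀ u ∈ YL, ∀ v ∈ YR, ¬ G.Adj u v

open SimpleGraph

/-- For `M ⊆ Y ⊆ V`, the number of consistent cuts `(Y_L, Y_R)` of `G[Y]` with `M ⊆ Y_L`
equals `2 ^ c`, where `c` is the number of connected components of `G[Y]` containing no
vertex of `M`. -/
theorem card_consistent_cuts_marked {V : Type} [Fintype V] [DecidableEq V] (G : SimpleGraph V)
    (Y M : Finset V) (hMY : M ⊆ Y) :
    Set.ncard {p : Finset V × Finset V | ConsCut G Y p.1 p.2 ∧ M ⊆ p.1} =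
      2 ^ Nat.card {c : (G.induce (Y : Set V)).ConnectedComponent //
            ∀ v : (Y : Set V), (G.induce (Y : Set V)).connectedComponentMk v = c →
              (v : V) ∉ M} := by
  classical
  set I := G.induce (Y : Set V) with hI
  set free : I.ConnectedComponent → Prop :=
    fun c => ∀ v : (Y : Set V), I.connectedComponentMk v = c → (v : V) ∉ M with hfree
  -- Key: in a consistent cut, reachable vertices are on the same side.
  have key : ∀ (YL YR : Finset V), ConsCut G Y YL YR →
      ∀ v w : (Y : Set V), I.Reachable v w → ((v : V) ∈ YL ↔ (w : V) ∈ YL) := by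
    intro YL YR hc v w hr
    obtain ⟨p⟩ := hr
    induction p with
    | nil => rfl
    | @cons a b c h q ih =>
      refine Iff.trans ?_ ih
      have hab : G.Adj (a : V) (b : V) := h
      have hmem : ∀ u : (Y : Set V), (u : V) ∈ YL ∪ YR := by
        intro u
        rw [hc.1]
        exact_mod_cast u.2
      constructor
      · intro ha
        rcases Finset.mem_union.mp (hmem b) with hb | hb
        · exact hb
        · exact absurd hab (hc.2.2 _ ha _ hb)
      · intro hb
        rcases Finset.mem_union.mp (hmem a) with ha | ha
        · exact ha
        · exact absurd hab.symm (hc.2.2 _ hb _ ha)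
  set S := {p : Finset V × Finset V | ConsCut G Y p.1 p.2 ∧ M ⊆ p.1} with hS
  -- The side-assignment map.
  set F : S → ({c // free c} → Bool) := fun p c =>
    ConnectedComponent.lift (fun v : (Y : Set V) => decide ((v : V) ∈ p.1.1))
      (fun v w q _ => decide_eq_decide.mpr (key _ _ p.2.1 v w q.reachable)) c.1 with hF
  have hFval : ∀ (p : S) (c : {c // free c}) (v : (Y : Set V)),
      I.connectedComponentMk v = c.1 → F p c = decide ((v : V) ∈ p.1.1) := by
    intro p c v hv
    rw [hF]
    simp only [← hv]
    rfl
  -- Vertices whose component meets M are always on the left.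
  have hforced : ∀ (p : S) (v : (Y : Set V)), ¬ free (I.connectedComponentMk v) →
      (v : V) ∈ p.1.1 := by
    intro p v hnf
    by_contra hvp
    apply hnf
    simp only [hfree]
    intro w hw hwM
    exact hvp ((key _ _ p.2.1 w v (ConnectedComponent.exact hw)).mp (p.2.2 hwM))
  have hsub : ∀ (p : S), p.1.1 ⊆ Y := by
    intro p
    rw [← p.2.1.1]
    exact Finset.subset_union_left
  have hFbij : Function.Bijective F := by
    constructor
    · -- injective
      intro p q hpq
      have h1 : p.1.1 = q.1.1 := by
        ext v
        constructor
        · intro hv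
          have hvY : v ∈ (Y : Set V) := by exact_mod_cast hsub p hv
          by_cases hf : free (I.connectedComponentMk (⟨v, hvY⟩ : (Y : Set V)))
          · have heq := congrFun hpq ⟨_, hf⟩
            rw [hFval p ⟨_, hf⟩ ⟨v, hvY⟩ rfl, hFval q ⟨_, hf⟩ ⟨v, hvY⟩ rfl] at heq
            exact of_decide_eq_true (heq ▸ decide_eq_true hv)
          · exact hforced q ⟨v, hvY⟩ hf
        · intro hv
          have hvY : v ∈ (Y : Set V) := by exact_mod_cast hsub q hv
          by_cases hf : free (I.connectedComponentMk (⟨v, hvY⟩ : (Y : Set V)))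
          · have heq := congrFun hpq ⟨_, hf⟩
            rw [hFval p ⟨_, hf⟩ ⟨v, hvY⟩ rfl, hFval q ⟨_, hf⟩ ⟨v, hvY⟩ rfl] at heq
            exact of_decide_eq_true (heq.symm ▸ decide_eq_true hv)
          · exact hforced p ⟨v, hvY⟩ hf
      have h2 : p.1.2 = q.1.2 := by
        have hp2 : p.1.2 = Y \ p.1.1 := by
          rw [← p.2.1.1, Finset.union_sdiff_cancel_left p.2.1.2.1]
        have hq2 : q.1.2 = Y \ q.1.1 := by
          rw [← q.2.1.1, Finset.union_sdiff_cancel_left q.2.1.2.1]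
        rw [hp2, hq2, h1]
      exact Subtype.ext (Prod.ext h1 h2)
    · -- surjective
      intro g
      set side : ↥(Y : Set V) → Bool :=
        fun u => if h : free (I.connectedComponentMk u) then g ⟨_, h⟩ else true with hside
      set YL : Finset V := Y.filter (fun v => ∀ h : v ∈ (Y : Set V), side ⟨v, h⟩ = true) with hYL
      set YR : Finset V := Y \ YL with hYR
      have hYLsub : YL ⊆ Y := by rw [hYL]; exact Finset.filter_subset _ _
      have hmemYL : ∀ v (h : v ∈ (Y : Set V)), v ∈ YL ↔ side ⟨v, h⟩ = true := by
        intro v h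
        rw [hYL, Finset.mem_filter]
        constructor
        · exact fun ⟨_, h2⟩ => h2 h
        · intro h2
          exact ⟨by exact_mod_cast h, fun _ => h2⟩
      have hcut : ConsCut G Y YL YR := by
        refine ⟨?_, Finset.disjoint_sdiff, ?_⟩
        · rw [hYR, Finset.union_sdiff_of_subset hYLsub]
        · intro u hu v hv hadj
          have huY : u ∈ (Y : Set V) := by exact_mod_cast hYLsub hu
          have hvY : v ∈ (Y : Set V) := by
            exact_mod_cast (Finset.mem_sdiff.mp hv).1
          have hIadj : I.Adj ⟨u, huY⟩ ⟨v, hvY⟩ := hadj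
          have hcc : I.connectedComponentMk ⟨u, huY⟩ = I.connectedComponentMk ⟨v, hvY⟩ :=
            ConnectedComponent.sound hIadj.reachable
          have hsides : side ⟨u, huY⟩ = side ⟨v, hvY⟩ := by
            rw [hside]; simp only [hcc]
          have hvnot : v ∉ YL := (Finset.mem_sdiff.mp hv).2
          rw [hmemYL v hvY] at hvnot
          rw [hmemYL u huY] at hu
          exact hvnot (hsides ▸ hu)
      have hM : M ⊆ YL := by
        intro v hv
        have hvY : v ∈ (Y : Set V) := by exact_mod_cast hMY hv
        rw [hmemYL v hvY, hside]
        have hnf : ¬ free (I.connectedComponentMk (⟨v, hvY⟩ : (Y : Set V))) := by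
          intro hf
          rw [hfree] at hf
          exact hf ⟨v, hvY⟩ rfl hv
        simp [hnf]
      refine ⟨⟨(YL, YR), hcut, hM⟩, ?_⟩
      funext c
      obtain ⟨u, hu⟩ := Quot.exists_rep c.1
      have hu' : I.connectedComponentMk u = c.1 := hu
      rw [hFval ⟨(YL, YR), hcut, hM⟩ c u hu']
      have hufree : free (I.connectedComponentMk u) := hu' ▸ c.2
      have h1 : (u : V) ∈ YL ↔ side u = true := hmemYL (u : V) u.2
      have h2 : side u = g ⟨I.connectedComponentMk u, hufree⟩ := by
        rw [hside]; exact dif_pos hufree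
      have h3 : (⟨I.connectedComponentMk u, hufree⟩ : {c // free c}) = c :=
        Subtype.ext hu'
      calc decide ((u : V) ∈ YL) = decide (side u = true) := decide_eq_decide.mpr h1
        _ = side u := by simp
        _ = g ⟨I.connectedComponentMk u, hufree⟩ := h2
        _ = g c := congrArg g h3
  rw [← Nat.card_coe_set_eq, Nat.card_eq_of_bijective F hFbij, Nat.card_fun,
    Nat.card_eq_fintype_card (α := Bool), Fintype.card_bool]
end

section
/- Let G = (V, E) be a finite simple undirected graph with n vertices, let k be a natural number, and let w_F, w_M : V → ℕ be weight functions; define the weight of a pair (Y, M) with M ⊆ Y ⊆ V as w(Y, M) = Σ_{y ∈ Y} w_F(y) + Σ_{m ∈ M} w_M(m). Then for every w₀ ∈ ℕ and every j with 0 ≤ j ≤ n − k − 1, the number of triples ((Y, M), (Y_L, Y_R)) such that M ⊆ Y ⊆ V, |Y| = n − k, (Y_L, Y_R) is a consistent cut of G[Y], M ⊆ Y_L, w(Y, M) = w₀, the number of edges of G[Y] equals j, and |M| = n − k − j, is congruent modulo 2 to the number of pairs (Y, M) such that M ⊆ Y ⊆ V, |Y| = n − k, G[Y] is a forest, every connected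 component of G[Y] contains a vertex of M, w(Y, M) = w₀, the number of edges of G[Y] equals j, and |M| = n − k − j. -/
/-- The number of edges of the subgraph of `G` induced by `Y`. -/
noncomputable def edgeCountIn {V : Type} [DecidableEq V] (G : SimpleGraph V) (Y : Finset V) : ℕ :=
  Set.ncard {e : Sym2 V | e ∈ G.edgeSet ∧ ∀ v ∈ e, v ∈ Y}

/-!
Split the triples `((Y, M), (Y_L, Y_R))` according to whether `M` meets every component of `G[Y]`.
If it does, a consistent cut with `M ⊆ Y_L` has to put all of `Y` on the left, so `(Y, M)` is
counted exactly once; moreover `G[Y]` is then automatically a forest: a graph with a cycle has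
more than `|Y|` edges plus components, while here the number of components is at most
`|M| = |Y| - j`. If some component `C` misses `M`, then `(Y_L, Y_R) ↦ (Y_L ∆ C, Y_R ∆ C)` is a
fixed-point-free involution of the admissible cuts, so there is an even number of them.
-/

theorem Set.even_ncard_of_involution {α : Type*} {s : Set α} (hs : s.Finite) (f : α → α)
    (hmaps : Set.MapsTo f s s) (hinv : ∀ x ∈ s, f (f x) = x) (hfree : ∀ x ∈ s, f x ≠ x) :
    Even s.ncard := by
  rw [Set.ncard_eq_toFinset_card s hs, ← ZMod.natCast_eq_zero_iff_even, Finset.cast_card]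
  exact Finset.sum_involution (fun x _ => f x) (fun _ _ => by decide)
    (fun x hx _ => hfree x (hs.mem_toFinset.mp hx))
    (fun x hx => hs.mem_toFinset.mpr (hmaps (hs.mem_toFinset.mp hx)))
    (fun x hx => hinv x (hs.mem_toFinset.mp hx))

theorem Set.ncard_prod_eq_sum {α β : Type*} [Fintype α] [Fintype β] (s : Set (α × β)) :
    s.ncard = ∑ a, {b | (a, b) ∈ s}.ncard := by
  classical
  simp only [Set.ncard_eq_toFinset_card', ← Set.filter_mem_univ_eq_toFinset,
    Finset.card_filter]
  exact Fintype.sum_prod_type _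

namespace SimpleGraph

variable {W : Type*} {H : SimpleGraph W}

def MarksEveryComponent (H : SimpleGraph W) (s : Set W) : Prop :=
  ∀ c : H.ConnectedComponent, ∃ v, H.connectedComponentMk v = c ∧ v ∈ s

theorem MarksEveryComponent.card_connectedComponent_le [Finite W] {s : Set W}
    (hs : H.MarksEveryComponent s) : Nat.card H.ConnectedComponent ≤ s.ncard := by
  rw [← Nat.card_coe_set_eq]
  refine Nat.card_le_card_of_surjective (fun v : s => H.connectedComponentMk v) fun c => ?_
  obtain ⟨v, hvc, hvs⟩ := hs c
  exact ⟨⟨v, hvs⟩, hvc⟩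

theorem Reachable.deleteEdges_singleton_cases {x y : W} (u v : W) (h : H.Reachable x y) :
    (H.deleteEdges {s(u, v)}).Reachable x y ∨
    (H.deleteEdges {s(u, v)}).Reachable x u ∧ (H.deleteEdges {s(u, v)}).Reachable v y ∨
    (H.deleteEdges {s(u, v)}).Reachable x v ∧ (H.deleteEdges {s(u, v)}).Reachable u y := by
  obtain ⟨p⟩ := h
  induction p with
  | nil => exact .inl .rfl
  | @cons a b c hab p ih =>
    by_cases he : s(a, b) = s(u, v)
    · rcases Sym2.eq_iff.mp he with ⟨rfl, rfl⟩ | ⟨rfl, rfl⟩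
      · rcases ih with h | ⟨h₁, h₂⟩ | ⟨-, h₂⟩
        exacts [.inr (.inl ⟨.rfl, h⟩), .inl (h₁.symm.trans h₂), .inl h₂]
      · rcases ih with h | ⟨-, h₂⟩ | ⟨h₁, h₂⟩
        exacts [.inr (.inr ⟨.rfl, h⟩), .inl h₂, .inl (h₁.symm.trans h₂)]
    · have hab' : (H.deleteEdges {s(u, v)}).Adj a b := by simp [hab, he]
      rcases ih with h | ⟨h₁, h₂⟩ | ⟨h₁, h₂⟩
      exacts [.inl (hab'.reachable.trans h), .inr (.inl ⟨hab'.reachable.trans h₁, h₂⟩),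
        .inr (.inr ⟨hab'.reachable.trans h₁, h₂⟩)]

theorem card_connectedComponent_deleteEdges_singleton_le [Finite W] (u v : W) :
    Nat.card (H.deleteEdges {s(u, v)}).ConnectedComponent ≤
      Nat.card H.ConnectedComponent + 1 := by
  classical
  set H' := H.deleteEdges {s(u, v)}
  let φ := ConnectedComponent.map (Hom.ofLE (H.deleteEdges_le {s(u, v)}))
  -- by `Reachable.deleteEdges_singleton_cases`, `φ` is injective away from the component of `v`
  let ψ (D : H'.ConnectedComponent) : Option H.ConnectedComponent :=
    if D = H'.connectedComponentMk v then none else some (φ D)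
  have hψ : ψ.Injective := by
    refine ConnectedComponent.ind₂ fun x y hxy => ?_
    by_cases hx : H'.connectedComponentMk x = H'.connectedComponentMk v <;>
      by_cases hy : H'.connectedComponentMk y = H'.connectedComponentMk v <;>
      simp only [ψ, H', hx, hy, if_true, if_false, reduceCtorEq, Option.some.injEq, φ,
        ConnectedComponent.map_mk, ConnectedComponent.eq] at hxy ⊢
    · rcases hxy.deleteEdges_singleton_cases u v with h | ⟨-, h⟩ | ⟨h, -⟩
      exacts [h, absurd (ConnectedComponent.sound h.symm) hy,
        absurd (ConnectedComponent.sound h) hx]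
  have := Nat.card_le_card_of_injective ψ hψ
  rwa [Finite.card_option] at this

theorem card_connectedComponent_deleteEdges_singleton_le_of_reachable [Finite W] {u v : W}
    (huv : (H.deleteEdges {s(u, v)}).Reachable u v) :
    Nat.card (H.deleteEdges {s(u, v)}).ConnectedComponent ≤ Nat.card H.ConnectedComponent := by
  refine Nat.card_le_card_of_injective
    (ConnectedComponent.map (Hom.ofLE (H.deleteEdges_le {s(u, v)})))
    (ConnectedComponent.ind₂ fun x y hxy => ?_)
  simp only [ConnectedComponent.map_mk, ConnectedComponent.eq] at hxy ⊢
  rcases hxy.deleteEdges_singleton_cases u v with h | ⟨h₁, h₂⟩ | ⟨h₁, h₂⟩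
  exacts [h, (h₁.trans huv).trans h₂, (h₁.trans huv.symm).trans h₂]

theorem card_edgeSet_deleteEdges_singleton_add_one [Finite W] {u v : W} (huv : H.Adj u v) :
    Nat.card (H.deleteEdges {s(u, v)}).edgeSet + 1 = Nat.card H.edgeSet := by
  simp only [Nat.card_coe_set_eq, edgeSet_deleteEdges]
  exact Set.ncard_sdiff_singleton_add_one huv

theorem card_le_card_edgeSet_add_card_connectedComponent [Finite W] (H : SimpleGraph W) :
    Nat.card W ≤ Nat.card H.edgeSet + Nat.card H.ConnectedComponent := by
  induction hn : Nat.card H.edgeSet generalizing H with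
  | zero =>
    have hbot : H = ⊥ := by
      rw [← edgeSet_eq_empty, ← Set.ncard_eq_zero, ← Nat.card_coe_set_eq, hn]
    subst hbot
    refine (Nat.card_le_card_of_injective (⊥ : SimpleGraph W).connectedComponentMk
      fun a b hab => ?_).trans_eq (zero_add _).symm
    exact reachable_bot.mp (ConnectedComponent.exact hab)
  | succ n ih =>
    obtain ⟨u, v, huv⟩ := (ne_bot_iff_exists_adj (G := H)).mp fun h => by simp [h] at hn
    have h₁ := ih (H.deleteEdges {s(u, v)}) (by
      have := card_edgeSet_deleteEdges_singleton_add_one huv; omega)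
    have h₂ := card_connectedComponent_deleteEdges_singleton_le (H := H) u v
    omega

theorem card_lt_card_edgeSet_add_card_connectedComponent [Finite W] (hH : ¬ H.IsAcyclic) :
    Nat.card W < Nat.card H.edgeSet + Nat.card H.ConnectedComponent := by
  obtain ⟨u, v, huv, hbridge⟩ : ∃ u v, H.Adj u v ∧ ¬ H.IsBridge s(u, v) := by
    simpa [isAcyclic_iff_forall_adj_isBridge] using hH
  have h₁ := card_le_card_edgeSet_add_card_connectedComponent (H.deleteEdges {s(u, v)})
  have h₂ := card_connectedComponent_deleteEdges_singleton_le_of_reachable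
    (isBridge_iff.not_left.mp hbridge)
  have h₃ := card_edgeSet_deleteEdges_singleton_add_one huv
  omega

theorem MarksEveryComponent.isAcyclic [Finite W] {s : Set W} (hs : H.MarksEveryComponent s)
    (hcard : Nat.card H.edgeSet + s.ncard ≤ Nat.card W) : H.IsAcyclic := by
  by_contra hH
  have := card_lt_card_edgeSet_add_card_connectedComponent hH
  have := hs.card_connectedComponent_le
  omega

end SimpleGraph

open scoped symmDiff

section Cuts

open SimpleGraph

variable {V : Type} [DecidableEq V] {G : SimpleGraph V} {Y L R C M : Finset V}

theorem card_edgeSet_induce :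
    Nat.card (G.induce (Y : Set V)).edgeSet = edgeCountIn G Y := by
  have himage : Sym2.map Subtype.val '' (G.induce (Y : Set V)).edgeSet =
      {e : Sym2 V | e ∈ G.edgeSet ∧ ∀ v ∈ e, v ∈ Y} := by
    ext e
    induction e using Sym2.ind with
    | _ a b =>
    constructor
    · rintro ⟨e', he', hee'⟩
      induction e' using Sym2.ind with
      | _ a' b' =>
      obtain ⟨rfl, rfl⟩ | ⟨rfl, rfl⟩ := Sym2.eq_iff.mp hee'
      · exact ⟨he', by simp⟩
      · exact ⟨he'.symm, by simp⟩
    · rintro ⟨hab, hY⟩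
      exact ⟨s(⟨a, hY a (Sym2.mem_mk_left a b)⟩, ⟨b, hY b (Sym2.mem_mk_right a b)⟩), hab, rfl⟩
  rw [edgeCountIn, ← himage, Nat.card_coe_set_eq,
    Set.ncard_image_of_injective _ (Sym2.map.injective Subtype.val_injective)]

namespace ConsCut

theorem mem_left_iff_of_adj (h : ConsCut G Y L R) {x z : V} (hx : x ∈ Y) (hz : z ∈ Y)
    (hxz : G.Adj x z) : x ∈ L ↔ z ∈ L := by
  obtain ⟨hLR, -, hnoedge⟩ := h
  rw [← hLR, Finset.mem_union] at hx hz
  constructor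
  · exact fun hxL => hz.resolve_right fun hzR => hnoedge x hxL z hzR hxz
  · exact fun hzL => hx.resolve_right fun hxR => hnoedge z hzL x hxR hxz.symm

theorem mem_left_iff_of_reachable (h : ConsCut G Y L R) {a b : (Y : Set V)}
    (hab : (G.induce (Y : Set V)).Reachable a b) : (a : V) ∈ L ↔ (b : V) ∈ L := by
  obtain ⟨p⟩ := hab
  induction p with
  | nil => rfl
  | cons hxz _ ih =>
    exact (h.mem_left_iff_of_adj (Subtype.prop _) (Subtype.prop _) hxz).trans ih

theorem right_eq_empty (h : ConsCut G Y L R) (hML : M ⊆ L)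
    (hM : (G.induce (Y : Set V)).MarksEveryComponent {v | (v : V) ∈ M}) : R = ∅ := by
  refine Finset.eq_empty_of_forall_notMem fun x hxR => ?_
  have hxY : x ∈ Y := h.1 ▸ Finset.mem_union_right L hxR
  obtain ⟨v, hvx, hvM⟩ := hM ((G.induce (Y : Set V)).connectedComponentMk ⟨x, hxY⟩)
  have hxL := (h.mem_left_iff_of_reachable (ConnectedComponent.exact hvx)).mp (hML hvM)
  exact Finset.disjoint_left.mp h.2.1 hxL hxR

theorem symmDiff (h : ConsCut G Y L R) (hCY : C ⊆ Y)
    (hC : ∀ u ∈ C, ∀ v ∈ Y, G.Adj u v → v ∈ C) : ConsCut G Y (L ∆ C) (R ∆ C) := by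
  obtain ⟨hLR, hdisj, hnoedge⟩ := h
  have hY : ∀ x, x ∈ Y ↔ x ∈ L ∨ x ∈ R := fun x => by rw [← hLR, Finset.mem_union]
  have hLR' : ∀ x, x ∈ L → x ∉ R := fun x hx => Finset.disjoint_left.mp hdisj hx
  refine ⟨?_, ?_, ?_⟩
  · ext x
    have := hY x
    have := hLR' x
    have := @hCY x
    simp only [Finset.mem_union, Finset.mem_symmDiff]
    tauto
  · refine Finset.disjoint_left.mpr fun x hxL hxR => ?_
    have := hLR' x
    have := hY x
    have := @hCY x
    simp only [Finset.mem_symmDiff] at hxL hxR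
    tauto
  · intro u hu v hv huv
    rw [Finset.mem_symmDiff] at hu hv
    have hvY : v ∈ Y := hv.elim (fun h => (hY v).mpr (.inr h.1)) (fun h => hCY h.1)
    by_cases huC : u ∈ C
    · have huR : u ∈ R :=
        ((hY u).mp (hCY huC)).resolve_left (hu.resolve_left fun h => h.2 huC).2
      have hvL : v ∈ L :=
        ((hY v).mp hvY).resolve_right (hv.resolve_left fun h => h.2 (hC u huC v hvY huv)).2
      exact hnoedge v hvL u huR huv.symm
    · have huL : u ∈ L := (hu.resolve_right fun h => huC h.1).1
      have hvR : v ∈ R :=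
        (hv.resolve_right fun h => huC (hC v h.1 u ((hY u).mpr (.inl huL)) huv.symm)).1
      exact hnoedge u huL v hvR huv

end ConsCut

theorem exists_closed_of_not_marksEveryComponent
    (hM : ¬ (G.induce (Y : Set V)).MarksEveryComponent {v | (v : V) ∈ M}) :
    ∃ C : Finset V, C ⊆ Y ∧ C.Nonempty ∧ Disjoint C M ∧
      ∀ u ∈ C, ∀ v ∈ Y, G.Adj u v → v ∈ C := by
  classical
  obtain ⟨c, hc⟩ : ∃ c : (G.induce (Y : Set V)).ConnectedComponent,
      ∀ v, (G.induce (Y : Set V)).connectedComponentMk v = c → (v : V) ∉ M := by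
    simpa [SimpleGraph.MarksEveryComponent] using hM
  obtain ⟨v₀, rfl⟩ := c.exists_rep
  refine ⟨{x ∈ Y | ∃ hx : x ∈ Y, (G.induce (Y : Set V)).Reachable ⟨x, hx⟩ v₀},
    Finset.filter_subset _ _, ⟨v₀, by simp⟩, ?_, ?_⟩
  · refine Finset.disjoint_left.mpr fun x hx hxM => ?_
    obtain ⟨-, hxY, hreach⟩ := Finset.mem_filter.mp hx
    exact hc ⟨x, hxY⟩ (ConnectedComponent.sound hreach) hxM
  · intro u hu v hvY huv
    obtain ⟨-, huY, hreach⟩ := Finset.mem_filter.mp hu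
    have hvu : (G.induce (Y : Set V)).Adj ⟨v, hvY⟩ ⟨u, huY⟩ := huv.symm
    exact Finset.mem_filter.mpr ⟨hvY, hvY, hvu.reachable.trans hreach⟩

theorem ncard_consCut_eq_one (hMY : M ⊆ Y)
    (hM : (G.induce (Y : Set V)).MarksEveryComponent {v | (v : V) ∈ M}) :
    {c : Finset V × Finset V | ConsCut G Y c.1 c.2 ∧ M ⊆ c.1}.ncard = 1 := by
  refine Set.ncard_eq_one.mpr ⟨(Y, ∅), Set.ext fun c => ⟨fun ⟨hc, hML⟩ => ?_, ?_⟩⟩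
  · have hR := hc.right_eq_empty hML hM
    have hL : c.1 = Y := by rw [← hc.1, hR, Finset.union_empty]
    exact Prod.ext hL hR
  · rintro rfl
    exact ⟨⟨Finset.union_empty Y, Finset.disjoint_empty_right Y, by simp⟩, hMY⟩

theorem even_ncard_consCut [Finite V] (hCY : C ⊆ Y) (hC : C.Nonempty) (hCM : Disjoint C M)
    (hclosed : ∀ u ∈ C, ∀ v ∈ Y, G.Adj u v → v ∈ C) :
    Even {c : Finset V × Finset V | ConsCut G Y c.1 c.2 ∧ M ⊆ c.1}.ncard := by
  refine Set.even_ncard_of_involution (Set.toFinite _) (fun c => (c.1 ∆ C, c.2 ∆ C))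
    (fun c ⟨hc, hML⟩ => ⟨hc.symmDiff hCY hclosed, fun m hm => ?_⟩)
    (fun c _ => by simp [symmDiff_symmDiff_cancel_right])
    (fun c _ hfix => hC.ne_empty (symmDiff_eq_left.mp (congrArg Prod.fst hfix)))
  exact Finset.mem_symmDiff.mpr (.inl ⟨hML hm, Finset.disjoint_right.mp hCM hm⟩)

theorem ncard_consCut_modEq [Finite V] (hMY : M ⊆ Y)
    [Decidable ((G.induce (Y : Set V)).MarksEveryComponent {v | (v : V) ∈ M})] :
    {c : Finset V × Finset V | ConsCut G Y c.1 c.2 ∧ M ⊆ c.1}.ncard ≡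
      if (G.induce (Y : Set V)).MarksEveryComponent {v | (v : V) ∈ M} then 1 else 0 [MOD 2] := by
  split_ifs with hM
  · rw [ncard_consCut_eq_one hMY hM]
  · obtain ⟨C, hCY, hC, hCM, hclosed⟩ := exists_closed_of_not_marksEveryComponent hM
    exact (even_ncard_consCut hCY hC hCM hclosed).two_dvd.modEq_zero_nat

theorem isAcyclic_induce_of_marksEveryComponent (hMY : M ⊆ Y)
    (hM : (G.induce (Y : Set V)).MarksEveryComponent {v | (v : V) ∈ M})
    (hcard : edgeCountIn G Y + M.card ≤ Y.card) : (G.induce (Y : Set V)).IsAcyclic := by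
  refine hM.isAcyclic ?_
  rwa [card_edgeSet_induce, Nat.card_coe_set_eq, Set.ncard_coe_finset,
    show {v : (Y : Set V) | (v : V) ∈ M} = Subtype.val ⁻¹' (M : Set V) from rfl,
    Set.ncard_preimage_of_injective_subset_range Subtype.val_injective (by simpa using hMY),
    Set.ncard_coe_finset]

end Cuts

/-- Cut&Count correctness for **Feedback Vertex Set**: with `n = |V|`, for every target weight
`w₀` and every `j ≤ n - k - 1`, the number of tuples `((Y, M), (Y_L, Y_R))` with `M ⊆ Y`,
`|Y| = n - k`, `(Y_L, Y_R)` a consistent cut of `G[Y]` with `M ⊆ Y_L`, weight `w₀`, `j` edges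
in `G[Y]` and `|M| = n - k - j`, is congruent modulo 2 to the number of pairs `(Y, M)` with
`M ⊆ Y`, `|Y| = n - k`, `G[Y]` a forest each of whose connected components meets `M`,
weight `w₀`, `j` edges in `G[Y]` and `|M| = n - k - j`. -/
theorem fvs_cut_and_count {V : Type} [Fintype V] [DecidableEq V] (G : SimpleGraph V)
    (k : ℕ) (wF wM : V → ℕ) (w₀ : ℕ) (j : ℕ) (hj : j ≤ Fintype.card V - k - 1) :
    Set.ncard {t : (Finset V × Finset V) × Finset V × Finset V |
        t.1.2 ⊆ t.1.1 ∧ t.1.1.card = Fintype.card V - k ∧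
        ConsCut G t.1.1 t.2.1 t.2.2 ∧ t.1.2 ⊆ t.2.1 ∧
        (∑ y ∈ t.1.1, wF y) + (∑ m ∈ t.1.2, wM m) = w₀ ∧
        edgeCountIn G t.1.1 = j ∧ t.1.2.card = Fintype.card V - k - j} ≡
      Set.ncard {p : Finset V × Finset V |
        p.2 ⊆ p.1 ∧ p.1.card = Fintype.card V - k ∧
        (G.induce (p.1 : Set V)).IsAcyclic ∧
        (∀ c : (G.induce (p.1 : Set V)).ConnectedComponent,
          ∃ v : (p.1 : Set V), (G.induce (p.1 : Set V)).connectedComponentMk v = c ∧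
            (v : V) ∈ p.2) ∧
        (∑ y ∈ p.1, wF y) + (∑ m ∈ p.2, wM m) = w₀ ∧
        edgeCountIn G p.1 = j ∧ p.2.card = Fintype.card V - k - j} [MOD 2] := by
  classical
  rw [Set.ncard_prod_eq_sum, Set.ncard_eq_toFinset_card', ← Set.filter_mem_univ_eq_toFinset,
    Finset.card_filter]
  refine Nat.ModEq.sum fun ⟨Y, M⟩ _ => ?_
  by_cases hbase : M ⊆ Y ∧ Y.card = Fintype.card V - k ∧
      (∑ y ∈ Y, wF y) + (∑ m ∈ M, wM m) = w₀ ∧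
      edgeCountIn G Y = j ∧ M.card = Fintype.card V - k - j
  · obtain ⟨hMY, hY, hw, hE, hM⟩ := hbase
    have hforest (hmarks : (G.induce (Y : Set V)).MarksEveryComponent {v | (v : V) ∈ M}) :=
      isAcyclic_induce_of_marksEveryComponent hMY hmarks (by omega)
    convert ncard_consCut_modEq (G := G) hMY using 3
    · ext c; simp [hMY, hY, hw, hE, hM]
    · simp only [Set.mem_ofPred_eq, hMY, hY, hw, hE, hM, true_and, and_true]
      exact ⟨fun h => h.2, fun h => ⟨hforest h, h⟩⟩
  · rw [if_neg fun h => hbase ⟨h.1, h.2.1, h.2.2.2.2⟩]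
    convert Nat.ModEq.refl 0 using 2
    refine (Set.ncard_eq_zero (Set.toFinite _)).mpr (Set.eq_empty_of_forall_notMem fun c hc => ?_)
    exact hbase ⟨hc.1, hc.2.1, hc.2.2.2.2⟩
end
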